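/- arXiv:1411.5139 — 2 statements merged into one kernel-verified Lean document; each statement's English description precedes it below -/
import Mathlib

section
/- Let 𝓡 be a unital real Banach algebra (not necessarily commutative) and let x ∈ 𝓡. Suppose that 0 belongs to the unbounded connected component of ℂ \ σ*_𝓡(x). Then there exists r ∈ 𝓡 such that e^r = x². -/
/-!
Work in the double commutant `A` of `x`: it is a closed, commutative subalgebra of `𝓡` in which an
element is invertible iff it is invertible in `𝓡`. In a commutative Banach algebra the exponentials
form a subgroup of the units containing a neighbourhood of `1` (inverse function theorem), so each
of its cosets is open in the group of units. Along the component `K` of `0`, the continuous map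
`λ ↦ x² - 2 Re λ • x + |λ|² • 1` takes values in the units of `A`, so it stays in one coset. For
`|λ|` large its value is `|λ|² (1 + o(1))`, an exponential, hence so is its value `x²` at `λ = 0`.
-/

open Set Filter Topology Bornology NormedSpace

/-- The real-symmetric spectrum of an element `x` of a unital real algebra `R`:
the set of `λ ∈ ℂ` such that `x² - 2(Re λ)·x + |λ|²·1` is not invertible in `R`. -/
def realSymSpectrum {R : Type*} [Ring R] [Algebra ℝ R] (x : R) : Set ℂ :=
  {lam : ℂ | ¬ IsUnit (x ^ 2 - (2 * lam.re) • x + (‖lam‖ ^ 2) • (1 : R))}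

theorem Complex.norm_inv_norm_sq_mul_re_le (lam : ℂ) :
    ‖(‖lam‖ ^ 2)⁻¹ * (2 * lam.re)‖ ≤ 2 * ‖lam‖⁻¹ := by
  rcases eq_or_ne lam 0 with rfl | hlam
  · simp
  have hpos : 0 < ‖lam‖ := norm_pos_iff.2 hlam
  rw [norm_mul, norm_inv, norm_pow, norm_norm, norm_mul, Real.norm_two, Real.norm_eq_abs]
  calc (‖lam‖ ^ 2)⁻¹ * (2 * |lam.re|) ≤ (‖lam‖ ^ 2)⁻¹ * (2 * ‖lam‖) := by
        gcongr; exact Complex.abs_re_le_norm lam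
    _ = 2 * ‖lam‖⁻¹ := by field_simp

noncomputable def realSymQuadratic {R : Type*} [Ring R] [Algebra ℝ R] (x : R) (lam : ℂ) : R :=
  x ^ 2 - (2 * lam.re) • x + (‖lam‖ ^ 2) • (1 : R)

section Ring

variable {R : Type*} [Ring R] [Algebra ℝ R]

theorem notMem_realSymSpectrum_iff {x : R} {lam : ℂ} :
    lam ∉ realSymSpectrum x ↔ IsUnit (realSymQuadratic x lam) :=
  not_not

theorem realSymQuadratic_zero (x : R) : realSymQuadratic x 0 = x ^ 2 := by
  simp [realSymQuadratic]

theorem map_realSymQuadratic {S F : Type*} [Ring S] [Algebra ℝ S] [FunLike F R S]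
    [AlgHomClass F ℝ R S] (f : F) (x : R) (lam : ℂ) :
    f (realSymQuadratic x lam) = realSymQuadratic (f x) lam := by
  simp [realSymQuadratic, map_smul]

end Ring

theorem continuous_realSymQuadratic {R : Type*} [NormedRing R] [NormedAlgebra ℝ R] (x : R) :
    Continuous (realSymQuadratic x) := by
  unfold realSymQuadratic
  fun_prop

theorem tendsto_inv_norm_sq_smul_realSymQuadratic {R : Type*} [NormedRing R] [NormedAlgebra ℝ R]
    (x : R) :
    Tendsto (fun lam : ℂ => (‖lam‖ ^ 2)⁻¹ • realSymQuadratic x lam) (cobounded ℂ) (𝓝 1) := by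
  have hnorm := tendsto_norm_cobounded_atTop (E := ℂ)
  have hinv : Tendsto (fun lam : ℂ => ‖lam‖⁻¹) (cobounded ℂ) (𝓝 0) :=
    tendsto_inv_atTop_zero.comp hnorm
  have hsq : Tendsto (fun lam : ℂ => (‖lam‖ ^ 2)⁻¹) (cobounded ℂ) (𝓝 0) :=
    tendsto_inv_atTop_zero.comp ((tendsto_pow_atTop two_ne_zero).comp hnorm)
  have hlin : Tendsto (fun lam : ℂ => (‖lam‖ ^ 2)⁻¹ * (2 * lam.re)) (cobounded ℂ) (𝓝 0) :=
    squeeze_zero_norm Complex.norm_inv_norm_sq_mul_re_le (by simpa using hinv.const_mul 2)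
  have hlim := ((hsq.smul_const (x ^ 2)).sub (hlin.smul_const x)).add_const (1 : R)
  rw [zero_smul, zero_smul, sub_zero, zero_add] at hlim
  refine hlim.congr' ?_
  filter_upwards [hnorm.eventually_gt_atTop 0] with lam hlam
  rw [realSymQuadratic, smul_add, smul_sub, smul_smul, smul_smul, inv_mul_cancel₀ (by positivity),
    one_smul]

section RangeExp

variable {B : Type*} [NormedCommRing B] [NormedAlgebra ℚ B] [CompleteSpace B]

theorem mul_mem_range_exp {a b : B} (ha : a ∈ range exp) (hb : b ∈ range exp) :
    a * b ∈ range exp := by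
  obtain ⟨r, rfl⟩ := ha
  obtain ⟨s, rfl⟩ := hb
  exact ⟨r + s, exp_add⟩

theorem mul_mem_range_exp_iff {a c : B} (hc : c ∈ range exp) :
    a * c ∈ range exp ↔ a ∈ range exp := by
  refine ⟨fun hac => ?_, fun ha => mul_mem_range_exp ha hc⟩
  obtain ⟨s, rfl⟩ := hc
  have : a * exp s * exp (-s) = a := by rw [mul_assoc, ← exp_add, add_neg_cancel, exp_zero, mul_one]
  exact this ▸ mul_mem_range_exp hac ⟨-s, rfl⟩

end RangeExp

theorem range_exp_mem_nhds_one (𝕂 : Type*) {B : Type*} [RCLike 𝕂] [NormedRing B]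
    [NormedAlgebra 𝕂 B] [CompleteSpace B] : range (exp : B → B) ∈ 𝓝 1 := by
  have h := (hasStrictFDerivAt_exp_zero (𝕂 := 𝕂) (𝔸 := B)).map_nhds_eq_of_equiv
    (f' := ContinuousLinearEquiv.refl 𝕂 B)
  rw [← exp_zero, ← h]
  exact range_mem_map

theorem algebraMap_mem_range_exp {B : Type*} [NormedRing B] [NormedAlgebra ℝ B] {c : ℝ}
    (hc : 0 < c) : algebraMap ℝ B c ∈ range exp :=
  ⟨algebraMap ℝ B (Real.log c), by
    rw [← algebraMap_exp_comm, ← Real.exp_eq_exp_ℝ, Real.exp_log hc]⟩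

section CommBanachAlgebra

variable {B : Type*} [NormedCommRing B] [NormedAlgebra ℝ B] [CompleteSpace B]

theorem eventually_mem_range_exp_iff (u : Bˣ) :
    ∀ᶠ v in 𝓝 (u : B), (v ∈ range exp ↔ (u : B) ∈ range exp) := by
  let +nondep : NormedAlgebra ℚ B := .restrictScalars ℚ ℝ B
  have h : Tendsto (fun v : B => ↑u⁻¹ * v) (𝓝 (u : B)) (𝓝 1) := by
    simpa using (continuous_const_mul (↑u⁻¹ : B)).tendsto (u : B)
  filter_upwards [h.eventually (range_exp_mem_nhds_one ℝ)] with v hv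
  calc v ∈ range exp ↔ ↑u * (↑u⁻¹ * v) ∈ range exp := by rw [Units.mul_inv_cancel_left]
    _ ↔ (u : B) ∈ range exp := mul_mem_range_exp_iff hv

theorem IsPreconnected.mem_range_exp_iff {X : Type*} [TopologicalSpace X] {K : Set X}
    (hK : IsPreconnected K) {g : X → B} (hg : ContinuousOn g K) (hunit : ∀ z ∈ K, IsUnit (g z))
    {z w : X} (hz : z ∈ K) (hw : w ∈ K) : g z ∈ range exp ↔ g w ∈ range exp := by
  refine hK.induction₂ (fun z w => g z ∈ range exp ↔ g w ∈ range exp) (fun z hz => ?_)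
    (fun _ _ _ _ _ _ => Iff.trans) (fun _ _ _ _ => Iff.symm) hz hw
  obtain ⟨u, hu⟩ := hunit z hz
  filter_upwards [(hg z hz).eventually (hu ▸ eventually_mem_range_exp_iff u)] with w hw
  exact hu ▸ hw.symm

theorem exists_realSymQuadratic_mem_range_exp {K : Set ℂ} (hK : ¬IsBounded K) (x : B) :
    ∃ lam ∈ K, realSymQuadratic x lam ∈ range exp := by
  let +nondep : NormedAlgebra ℚ B := .restrictScalars ℚ ℝ B
  have hfreq : ∃ᶠ lam in cobounded ℂ, lam ∈ K := fun h => hK (isBounded_def.2 h)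
  have hexp := (tendsto_inv_norm_sq_smul_realSymQuadratic x).eventually (range_exp_mem_nhds_one ℝ)
  have hne := (tendsto_norm_cobounded_atTop (E := ℂ)).eventually_gt_atTop 0
  obtain ⟨lam, hlamK, hlam, hpos⟩ := (hfreq.and_eventually (hexp.and hne)).exists
  refine ⟨lam, hlamK, ?_⟩
  have hsq : (0 : ℝ) < ‖lam‖ ^ 2 := by positivity
  have key : realSymQuadratic x lam
      = algebraMap ℝ B (‖lam‖ ^ 2) * ((‖lam‖ ^ 2)⁻¹ • realSymQuadratic x lam) := by
    rw [← Algebra.smul_def, smul_smul, mul_inv_cancel₀ hsq.ne', one_smul]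
  exact key ▸ mul_mem_range_exp (algebraMap_mem_range_exp hsq) hlam

theorem sq_mem_range_exp_of_isPreconnected {K : Set ℂ} (hK : IsPreconnected K) (h0 : 0 ∈ K)
    (hKunb : ¬IsBounded K) (x : B) (hunit : ∀ lam ∈ K, IsUnit (realSymQuadratic x lam)) :
    x ^ 2 ∈ range exp := by
  obtain ⟨lam, hlam, hexp⟩ := exists_realSymQuadratic_mem_range_exp hKunb x
  rw [← realSymQuadratic_zero x]
  exact (hK.mem_range_exp_iff (continuous_realSymQuadratic x).continuousOn hunit h0 hlam).2 hexp

end CommBanachAlgebra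

theorem Subalgebra.isUnit_coe_centralizer_iff {𝕜 A : Type*} [CommSemiring 𝕜] [Ring A]
    [Algebra 𝕜 A] {s : Set A} {a : centralizer 𝕜 s} : IsUnit (a : A) ↔ IsUnit a := by
  refine ⟨fun ⟨u, hu⟩ => ?_, fun h => h.map (centralizer 𝕜 s).val⟩
  have hinv : (↑u⁻¹ : A) ∈ centralizer 𝕜 s := fun g hg =>
    Commute.units_inv_right (show Commute g u from hu ▸ a.2 g hg)
  exact ⟨⟨a, ⟨_, hinv⟩, Subtype.ext (by simp [← hu]), Subtype.ext (by simp [← hu])⟩, rfl⟩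

theorem stmt6_general {R : Type*} [NormedRing R] [NormedAlgebra ℝ R]
    [CompleteSpace R] (x : R)
    (hunb : ¬ Bornology.IsBounded (connectedComponentIn (realSymSpectrum x)ᶜ 0)) :
    ∃ r : R, NormedSpace.exp r = x ^ 2 := by
  set K := connectedComponentIn (realSymSpectrum x)ᶜ 0
  have h0 : (0 : ℂ) ∈ K := mem_connectedComponentIn
    (connectedComponentIn_nonempty_iff.1 (nonempty_of_not_isBounded hunb))
  let A := Subalgebra.centralizer ℝ (Set.centralizer {x})
  have : CompleteSpace A := (Set.isClosed_centralizer _).completeSpace_coe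
  let : NormedCommRing A := { (inferInstance : NormedRing A) with
    mul_comm := fun a b => Subtype.ext
      (Set.centralizer_centralizer_comm_of_comm (by simp) _ a.2 _ b.2) }
  let y : A := ⟨x, Set.subset_centralizer_centralizer rfl⟩
  have hunit (lam : ℂ) (hlam : lam ∈ K) : IsUnit (realSymQuadratic y lam) := by
    rw [← Subalgebra.isUnit_coe_centralizer_iff, ← A.val_apply, map_realSymQuadratic]
    exact notMem_realSymSpectrum_iff.1 (connectedComponentIn_subset _ _ hlam)
  obtain ⟨r, hr⟩ :=
    sq_mem_range_exp_of_isPreconnected isPreconnected_connectedComponentIn h0 hunb y hunit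
  let +nondep : NormedAlgebra ℚ A := .restrictScalars ℚ ℝ A
  let +nondep : NormedAlgebra ℚ R := .restrictScalars ℚ ℝ R
  exact ⟨r, (map_exp A.val continuous_subtype_val r).symm.trans (congrArg A.val hr)⟩

/-- If `𝓡` is a unital real Banach algebra, `x ∈ 𝓡`, and `0` belongs to the unbounded
connected component of `ℂ \ σ*_𝓡(x)`, then there exists `r ∈ 𝓡` with `e^r = x²`. -/
theorem stmt6 {R : Type*} [NormedRing R] [NormOneClass R] [NormedAlgebra ℝ R]
    [CompleteSpace R] (x : R)
    (h0 : (0 : ℂ) ∈ (realSymSpectrum x)ᶜ)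
    (hunb : ¬ Bornology.IsBounded (connectedComponentIn (realSymSpectrum x)ᶜ 0)) :
    ∃ r : R, NormedSpace.exp r = x ^ 2 :=
  stmt6_general x hunb
end

section
/- Let n ≥ 1 and let Ĩ_n ∈ M_n(ℝ) be the diagonal matrix with diagonal entries (-1, 1, …, 1). The set of matrices M ∈ M_n(ℝ) with det M < 0 is exactly the set of matrices of the form Ĩ_n · e^{M_1} ⋯ e^{M_m} where m ≥ 1 and M_1, …, M_m ∈ M_n(ℝ). -/
/-!
Since `det e^A = (det e^{A/2})² > 0`, every `Ĩₙ e^{M₁} ⋯ e^{Mₘ}` has negative determinant.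
Conversely, as `Ĩₙ² = 1`, it suffices to write every `P` with `det P > 0` as a product of
exponentials. Gaussian elimination gives `P = (transvections) · diag d · (transvections)` with
`∏ d = det P > 0`. A transvection `1 + c E_ij` is `e^{c E_ij}`, a positive diagonal matrix is the
exponential of a diagonal matrix, and the negative entries of `d` come in pairs, each of which is
removed by `diag(…, -1, …, -1, …) = ((1 + E_ij)(1 - E_ji)(1 + E_ij))²`.
-/

open Matrix NormedSpace

theorem exp_eq_one_add_of_mul_self_eq_zero {𝔸 : Type*} [Ring 𝔸] [Algebra ℚ 𝔸]
    [TopologicalSpace 𝔸] [IsTopologicalRing 𝔸] {a : 𝔸} (ha : a * a = 0) : exp a = 1 + a := by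
  have hpow : ∀ k, a ^ (k + 2) = 0 := fun k => by rw [pow_add, sq, ha, mul_zero]
  rw [congrFun (exp_eq_tsum ℚ) a, tsum_eq_sum (s := Finset.range 2) fun k hk => ?_]
  · simp [Finset.sum_range_succ]
  · obtain ⟨k, rfl⟩ := Nat.exists_eq_add_of_le' (not_lt.mp (Finset.mem_range.not.mp hk))
    rw [hpow, smul_zero]

theorem Finset.exists_ne_neg_of_prod_pos {ι R : Type*} [DecidableEq ι] [CommRing R]
    [LinearOrder R] [IsStrictOrderedRing R] {s : Finset ι} {f : ι → R}
    (hf : 0 < ∏ k ∈ s, f k) {i : ι} (hi : i ∈ s) (hfi : f i < 0) : ∃ j ∈ s, j ≠ i ∧ f j < 0 := by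
  by_contra! h
  have hrest : 0 ≤ ∏ k ∈ s.erase i, f k :=
    Finset.prod_nonneg fun k hk => h k (Finset.mem_of_mem_erase hk) (Finset.ne_of_mem_erase hk)
  rw [← Finset.mul_prod_erase s f hi] at hf
  exact (mul_nonpos_of_nonpos_of_nonneg hfi.le hrest).not_gt hf

namespace Matrix

theorem diagonal_neg_one_pair_eq_sq {ι R : Type*} [Fintype ι] [DecidableEq ι] [CommRing R]
    {i j : ι} (hij : i ≠ j) :
    diagonal (fun k => if k = i ∨ k = j then (-1 : R) else 1) =
      (transvection i j 1 * transvection j i (-1) * transvection i j 1) ^ 2 := by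
  have hrot : transvection i j 1 * transvection j i (-1) * transvection i j (1 : R) =
      1 + single i j 1 - single j i 1 - single i i 1 - single j j 1 := by
    simp only [transvection, mul_add, mul_one, add_mul, one_mul, single_mul_single_same, mul_neg,
      ne_eq, hij.symm, not_false_eq_true, single_mul_single_of_ne, add_zero]
    ext a b
    simp only [add_apply, sub_apply, one_apply, single_apply]
    grind
  rw [hrot, sq]
  simp only [mul_sub, mul_add, mul_one, sub_mul, add_mul, one_mul, ne_eq, hij.symm, hij,
    not_false_eq_true, single_mul_single_of_ne, add_zero, single_mul_single_same,
    sub_sub_cancel_left, sub_zero, add_sub_cancel_left, sub_neg_eq_add]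
  ext a b
  simp only [diagonal_apply, sub_apply, add_apply, neg_apply, one_apply, single_apply]
  grind

theorem diagonal_eq_diagonal_neg_one_pair_mul {ι R : Type*} [Fintype ι] [DecidableEq ι] [CommRing R]
    (d : ι → R) (i j : ι) :
    diagonal d = diagonal (fun k => if k = i ∨ k = j then (-1 : R) else 1) *
      diagonal (fun k => if k = i ∨ k = j then -d k else d k) := by
  rw [diagonal_mul_diagonal]
  congr 1
  ext k
  split_ifs <;> ring

variable {ι : Type*} [Fintype ι] [DecidableEq ι]

theorem det_exp_pos (A : Matrix ι ι ℝ) : 0 < (exp A).det := by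
  have hsq : exp A = exp ((1 / 2 : ℝ) • A) * exp ((1 / 2 : ℝ) • A) := by
    rw [← exp_add_of_commute _ _ (Commute.refl _)]
    congr 1
    module
  rw [hsq, det_mul]
  exact mul_self_pos.mpr ((isUnit_iff_isUnit_det _).mp (isUnit_exp ((1 / 2 : ℝ) • A))).ne_zero

variable (ι) in
def expSubmonoid : Submonoid (Matrix ι ι ℝ) :=
  Submonoid.closure (Set.range exp)

theorem exp_mem_expSubmonoid (A : Matrix ι ι ℝ) : exp A ∈ expSubmonoid ι :=
  Submonoid.subset_closure ⟨A, rfl⟩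

theorem mem_expSubmonoid_iff {M : Matrix ι ι ℝ} :
    M ∈ expSubmonoid ι ↔ ∃ l : List (Matrix ι ι ℝ), l ≠ [] ∧ M = (l.map exp).prod := by
  constructor
  · intro hM
    induction hM using Submonoid.closure_induction with
    | mem _ h =>
      obtain ⟨A, rfl⟩ := h
      exact ⟨[A], by simp, by simp⟩
    | one => exact ⟨[0], by simp, by simp⟩
    | mul _ _ _ _ ih₁ ih₂ =>
      obtain ⟨l₁, hl₁, rfl⟩ := ih₁
      obtain ⟨l₂, -, rfl⟩ := ih₂
      exact ⟨l₁ ++ l₂, by simp [hl₁], by simp⟩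
  · rintro ⟨l, -, rfl⟩
    exact Submonoid.list_prod_mem _ (by simpa using fun A _ => exp_mem_expSubmonoid A)

theorem det_pos_of_mem_expSubmonoid {M : Matrix ι ι ℝ} (hM : M ∈ expSubmonoid ι) :
    0 < M.det := by
  induction hM using Submonoid.closure_induction with
  | mem _ h =>
    obtain ⟨A, rfl⟩ := h
    exact det_exp_pos A
  | one => simp
  | mul _ _ _ _ ih₁ ih₂ => simpa using mul_pos ih₁ ih₂

theorem transvection_mem_expSubmonoid {i j : ι} (hij : i ≠ j) (c : ℝ) :
    transvection i j c ∈ expSubmonoid ι := by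
  rw [transvection,
    ← exp_eq_one_add_of_mul_self_eq_zero (single_mul_single_of_ne c i j i hij.symm c)]
  exact exp_mem_expSubmonoid _

theorem diagonal_mem_expSubmonoid_of_pos {d : ι → ℝ} (hd : ∀ k, 0 < d k) :
    diagonal d ∈ expSubmonoid ι := by
  convert exp_mem_expSubmonoid (diagonal fun k => Real.log (d k))
  rw [exp_diagonal]
  congr 1
  ext k
  rw [Pi.exp_def, ← Real.exp_eq_exp_ℝ]
  exact (Real.exp_log (hd k)).symm

theorem diagonal_neg_one_pair_mem_expSubmonoid {i j : ι} (hij : i ≠ j) :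
    diagonal (fun k => if k = i ∨ k = j then (-1 : ℝ) else 1) ∈ expSubmonoid ι := by
  rw [diagonal_neg_one_pair_eq_sq hij]
  refine pow_mem (mul_mem (mul_mem ?_ ?_) ?_) 2 <;>
    first
    | exact transvection_mem_expSubmonoid hij _
    | exact transvection_mem_expSubmonoid hij.symm _

theorem diagonal_mem_expSubmonoid_of_prod_pos {d : ι → ℝ} (hd : 0 < ∏ k, d k) :
    diagonal d ∈ expSubmonoid ι := by
  generalize hN : ({k | d k < 0} : Finset ι) = N
  induction N using Finset.strongInduction generalizing d with
  | H N ih =>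
  subst hN
  rcases Finset.eq_empty_or_nonempty ({k | d k < 0} : Finset ι) with hN | ⟨i, hi⟩
  · refine diagonal_mem_expSubmonoid_of_pos fun k => (not_lt.mp ?_).lt_of_ne' ?_
    · simpa using Finset.filter_eq_empty_iff.mp hN (Finset.mem_univ k)
    · exact Finset.prod_ne_zero_iff.mp hd.ne' k (Finset.mem_univ k)
  have hdi : d i < 0 := (Finset.mem_filter.mp hi).2
  obtain ⟨j, -, hji, hdj⟩ := Finset.exists_ne_neg_of_prod_pos hd (Finset.mem_univ i) hdi
  set d' : ι → ℝ := fun k => if k = i ∨ k = j then -d k else d k with hd'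
  have hflip := diagonal_neg_one_pair_mem_expSubmonoid hji.symm
  have hsplit := diagonal_eq_diagonal_neg_one_pair_mul d i j
  have hd'_pos : 0 < ∏ k, d' k := by
    rw [← det_diagonal, hsplit, det_mul, det_diagonal (d := d')] at hd
    exact pos_of_mul_pos_right hd (det_pos_of_mem_expSubmonoid hflip).le
  rw [hsplit]
  have hneg : ({k | d' k < 0} : Finset ι) ⊂ ({k | d k < 0} : Finset ι) := by
    refine (Finset.ssubset_iff_of_subset fun k hk => ?_).mpr ⟨i, hi, ?_⟩
    · simp only [Finset.mem_filter, Finset.mem_univ, true_and, hd'] at hk ⊢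
      split_ifs at hk with hk'
      · rcases hk' with rfl | rfl <;> linarith
      · exact hk
    · simp [hd', hdi.le]
  exact mul_mem hflip (ih _ hneg hd'_pos rfl)

theorem mem_expSubmonoid_of_det_pos {M : Matrix ι ι ℝ} (hM : 0 < M.det) :
    M ∈ expSubmonoid ι :=
  diagonal_transvection_induction (· ∈ expSubmonoid ι) M
    (fun _ hD => diagonal_mem_expSubmonoid_of_prod_pos (by rwa [← det_diagonal, hD]))
    (fun t => transvection_mem_expSubmonoid t.hij t.c) fun _ _ => mul_mem

end Matrix

/-- For `n ≥ 1`, with `Ĩₙ = diag(-1, 1, …, 1)`, the set of real `n × n` matrices with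
negative determinant is exactly the set of matrices `Ĩₙ · e^{M₁} ⋯ e^{Mₘ}` with `m ≥ 1`. -/
theorem stmt12 {n : ℕ} (hn : 1 ≤ n) :
    {M : Matrix (Fin n) (Fin n) ℝ | M.det < 0} =
      {M : Matrix (Fin n) (Fin n) ℝ |
        ∃ l : List (Matrix (Fin n) (Fin n) ℝ), l ≠ [] ∧
          M = (Matrix.diagonal fun i : Fin n => if (i : ℕ) = 0 then (-1 : ℝ) else 1) *
              (l.map NormedSpace.exp).prod} := by
  set σ : Matrix (Fin n) (Fin n) ℝ := diagonal fun i => if (i : ℕ) = 0 then -1 else 1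
  have hσσ : σ * σ = 1 := by
    rw [diagonal_mul_diagonal, ← diagonal_one]
    congr 1
    ext i
    split_ifs <;> norm_num
  have hdetσ : σ.det = -1 := by
    obtain ⟨m, rfl⟩ := Nat.exists_eq_add_of_le' hn
    simp [σ, det_diagonal]
  ext M
  constructor
  · intro hM
    obtain ⟨l, hl, hl'⟩ := mem_expSubmonoid_iff.mp <| mem_expSubmonoid_of_det_pos <|
      show 0 < (σ * M).det by rw [det_mul, hdetσ]; linarith [hM.out]
    exact ⟨l, hl, by rw [← hl', ← mul_assoc, hσσ, one_mul]⟩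
  · rintro ⟨l, hl, rfl⟩
    have := det_pos_of_mem_expSubmonoid (mem_expSubmonoid_iff.mpr ⟨l, hl, rfl⟩)
    show (σ * _).det < 0
    rw [det_mul, hdetσ]
    linarith
end
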